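/- Suppose u(p,ξ) < ∞, and ξ(k) = a, ξ(k+1) = b with a ≠ b. Let ξ' be the sequence obtained from ξ by swapping the looks at positions k and k+1. Then u(p,ξ) − u(p,ξ') = t_a · p_b (1−q_b)^{N_b(ξ,k)} q_b − t_b · p_a (1−q_a)^{N_a(ξ,k)} q_a. In particular, u(p,ξ') ≤ u(p,ξ) if and only if p_b (1−q_b)^{N_b(ξ,k)} q_b / t_b ≥ p_a (1−q_a)^{N_a(ξ,k)} q_a / t_a. -/

import Mathlib

open scoped ENNReal

/-- `looks ξ j k` = number of looks in box `j` among the first `k` looks of `ξ`. -/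
def looks {n : ℕ} (ξ : ℕ → Fin n) (j : Fin n) (k : ℕ) : ℕ :=
  ((Finset.range k).filter (fun i => ξ i = j)).card

/-- Expected search time (in `[0,∞]`) to find a target hidden in box `j`, when the boxes
have search times `t` and detection probabilities `q`, and the Searcher uses the
sequence `ξ`. -/
noncomputable def searchTime {n : ℕ} (t q : Fin n → ℝ) (j : Fin n) (ξ : ℕ → Fin n) : ℝ≥0∞ :=
  ∑' k : ℕ, ENNReal.ofReal (t (ξ k) * (1 - q j) ^ looks ξ j k)

/-- Expected search time against the mixed Hider strategy `p`. -/
noncomputable def mixedSearchTime {n : ℕ} (t q : Fin n → ℝ) (p : Fin n → ℝ)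
    (ξ : ℕ → Fin n) : ℝ≥0∞ :=
  ∑ j : Fin n, ENNReal.ofReal (p j) * searchTime t q j ξ

/-!
Swapping looks `k` and `k + 1` does not change, at any position other than `k + 1`, how often
each box has been searched before; so in every `u(j, ·)` only the summands at positions `k` and
`k + 1` change. Writing `W(ξ)` for the `p`-weighted cost of these two looks, this gives
`u(p, ξ) + W(ξ') = u(p, ξ') + W(ξ)` in `[0, ∞]`, with no finiteness needed. Once `u(p, ξ) < ∞`
one may subtract, and `W(ξ) - W(ξ')` is computed box by box: only boxes `a` and `b` contribute,
through `(1 - q)^N - (1 - q)^(N + 1) = (1 - q)^N q`.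
-/

open Finset

lemma ENNReal.tsum_add_sum_eq_tsum_add_sum {α : Type*} {f g : α → ℝ≥0∞} (s : Finset α)
    (h : ∀ i ∉ s, f i = g i) :
    ∑' i, f i + ∑ i ∈ s, g i = ∑' i, g i + ∑ i ∈ s, f i := by
  rw [← ENNReal.sum_add_tsum_compl s f, ← ENNReal.sum_add_tsum_compl s g,
    tsum_congr fun i : ↥(s : Set α)ᶜ => h i i.2]
  ac_rfl

lemma ENNReal.toReal_sub_toReal_of_add_ofReal_eq {x y : ℝ≥0∞} {c c' : ℝ} (hx : x ≠ ⊤)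
    (hy : y ≠ ⊤) (hc : 0 ≤ c) (hc' : 0 ≤ c')
    (h : x + ENNReal.ofReal c' = y + ENNReal.ofReal c) : x.toReal - y.toReal = c - c' := by
  have := congrArg ENNReal.toReal h
  rw [ENNReal.toReal_add hx ENNReal.ofReal_ne_top, ENNReal.toReal_add hy ENNReal.ofReal_ne_top,
    ENNReal.toReal_ofReal hc, ENNReal.toReal_ofReal hc'] at this
  linarith

lemma Equiv.swap_add_one_apply_lt_iff {k m i : ℕ} (hm : m ≠ k + 1) :
    Equiv.swap k (k + 1) i < m ↔ i < m := by
  rw [Equiv.swap_apply_def]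
  split_ifs <;> omega

section Looks

variable {n : ℕ} (ξ : ℕ → Fin n) (j : Fin n)

lemma looks_succ (m : ℕ) : looks ξ j (m + 1) = looks ξ j m + if ξ m = j then 1 else 0 := by
  simp only [looks, ← Nat.count_eq_card_filter_range, Nat.count_succ]

lemma looks_comp_perm {m : ℕ} (σ : Equiv.Perm ℕ) (hσ : ∀ i, σ i < m ↔ i < m) :
    looks (ξ ∘ σ) j m = looks ξ j m := by
  have hσ' : ∀ i, σ.symm i < m ↔ i < m := fun i => by simpa using (hσ (σ.symm i)).symm
  unfold looks
  refine card_nbij' σ σ.symm ?_ ?_ ?_ ?_ <;> intro i <;> simp_all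

lemma looks_comp_swap_of_ne {k m : ℕ} (hm : m ≠ k + 1) :
    looks (ξ ∘ Equiv.swap k (k + 1)) j m = looks ξ j m :=
  looks_comp_perm ξ j _ fun _ => Equiv.swap_add_one_apply_lt_iff hm

end Looks

section Exchange

variable {n : ℕ} (t q : Fin n → ℝ)

def searchTerm (j : Fin n) (ξ : ℕ → Fin n) (i : ℕ) : ℝ :=
  t (ξ i) * (1 - q j) ^ looks ξ j i

variable {t q}

lemma searchTerm_nonneg (ht : ∀ j, 0 ≤ t j) (hq1 : ∀ j, q j ≤ 1) (j : Fin n) (ξ : ℕ → Fin n)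
    (i : ℕ) : 0 ≤ searchTerm t q j ξ i :=
  mul_nonneg (ht _) (pow_nonneg (sub_nonneg.2 (hq1 j)) _)

lemma searchTerm_comp_swap_of_ne (j : Fin n) (ξ : ℕ → Fin n) {k i : ℕ} (hik : i ≠ k)
    (hik' : i ≠ k + 1) :
    searchTerm t q j (ξ ∘ Equiv.swap k (k + 1)) i = searchTerm t q j ξ i := by
  rw [searchTerm, searchTerm, looks_comp_swap_of_ne ξ j hik', Function.comp_apply,
    Equiv.swap_apply_of_ne_of_ne hik hik']

/-- Stated additively because `searchTime` may be infinite. -/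
lemma searchTime_add_window_eq (ht : ∀ j, 0 ≤ t j) (hq1 : ∀ j, q j ≤ 1) (j : Fin n)
    (ξ : ℕ → Fin n) (k : ℕ) :
    searchTime t q j ξ +
        ENNReal.ofReal (∑ i ∈ {k, k + 1}, searchTerm t q j (ξ ∘ Equiv.swap k (k + 1)) i) =
      searchTime t q j (ξ ∘ Equiv.swap k (k + 1)) +
        ENNReal.ofReal (∑ i ∈ {k, k + 1}, searchTerm t q j ξ i) := by
  simp only [ENNReal.ofReal_sum_of_nonneg fun i _ => searchTerm_nonneg ht hq1 j _ i]
  refine ENNReal.tsum_add_sum_eq_tsum_add_sum (f := fun i => ENNReal.ofReal (searchTerm t q j ξ i))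
    _ fun i hi => ?_
  simp only [mem_insert, mem_singleton, not_or] at hi
  rw [searchTerm_comp_swap_of_ne j ξ hi.1 hi.2]

lemma window_sub_window_comp_swap (j : Fin n) (ξ : ℕ → Fin n) (k : ℕ) :
    ∑ i ∈ {k, k + 1}, searchTerm t q j ξ i -
        ∑ i ∈ {k, k + 1}, searchTerm t q j (ξ ∘ Equiv.swap k (k + 1)) i =
      t (ξ k) * (if ξ (k + 1) = j then (1 - q j) ^ looks ξ j k * q j else 0) -
        t (ξ (k + 1)) * (if ξ k = j then (1 - q j) ^ looks ξ j k * q j else 0) := by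
  have hlooks := looks_comp_swap_of_ne ξ j (m := k) (k := k) (by omega)
  simp only [sum_pair (show k ≠ k + 1 by omega), searchTerm, looks_succ, Function.comp_apply,
    Equiv.swap_apply_left, Equiv.swap_apply_right, hlooks]
  split_ifs <;> ring

variable (t q) in
/-- The part of the mixed expected search time contributed by looks `k` and `k + 1`. -/
def windowCost (p : Fin n → ℝ) (ξ : ℕ → Fin n) (k : ℕ) : ℝ :=
  ∑ j, p j * ∑ i ∈ {k, k + 1}, searchTerm t q j ξ i

lemma windowCost_nonneg (ht : ∀ j, 0 ≤ t j) (hq1 : ∀ j, q j ≤ 1) {p : Fin n → ℝ}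
    (hp0 : ∀ j, 0 ≤ p j) (ξ : ℕ → Fin n) (k : ℕ) : 0 ≤ windowCost t q p ξ k :=
  sum_nonneg fun j _ => mul_nonneg (hp0 j) (sum_nonneg fun i _ => searchTerm_nonneg ht hq1 j ξ i)

lemma mixedSearchTime_add_windowCost_eq (ht : ∀ j, 0 ≤ t j) (hq1 : ∀ j, q j ≤ 1)
    {p : Fin n → ℝ} (hp0 : ∀ j, 0 ≤ p j) (ξ : ℕ → Fin n) (k : ℕ) :
    mixedSearchTime t q p ξ +
        ENNReal.ofReal (windowCost t q p (ξ ∘ Equiv.swap k (k + 1)) k) =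
      mixedSearchTime t q p (ξ ∘ Equiv.swap k (k + 1)) +
        ENNReal.ofReal (windowCost t q p ξ k) := by
  have hwindow (ζ : ℕ → Fin n) (j : Fin n) : 0 ≤ p j * ∑ i ∈ {k, k + 1}, searchTerm t q j ζ i :=
    mul_nonneg (hp0 j) (sum_nonneg fun i _ => searchTerm_nonneg ht hq1 j ζ i)
  simp only [mixedSearchTime, windowCost, ENNReal.ofReal_sum_of_nonneg fun j _ => hwindow _ j,
    ← sum_add_distrib, ENNReal.ofReal_mul (hp0 _), ← mul_add]
  exact sum_congr rfl fun j _ => by rw [searchTime_add_window_eq ht hq1]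

lemma windowCost_sub_windowCost_comp_swap (p : Fin n → ℝ) (ξ : ℕ → Fin n) (k : ℕ) :
    windowCost t q p ξ k - windowCost t q p (ξ ∘ Equiv.swap k (k + 1)) k =
      t (ξ k) * (p (ξ (k + 1)) * (1 - q (ξ (k + 1))) ^ looks ξ (ξ (k + 1)) k * q (ξ (k + 1))) -
        t (ξ (k + 1)) * (p (ξ k) * (1 - q (ξ k)) ^ looks ξ (ξ k) k * q (ξ k)) := by
  rw [windowCost, windowCost, ← sum_sub_distrib]
  simp_rw [← mul_sub, window_sub_window_comp_swap, mul_sub, mul_ite, mul_zero]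
  rw [sum_sub_distrib, sum_ite_eq, sum_ite_eq, if_pos (mem_univ _), if_pos (mem_univ _)]
  ring

end Exchange

theorem swap_adjacent_looks_general
    {n : ℕ} (t q : Fin n → ℝ) (ht : ∀ j, 0 < t j) (hq1 : ∀ j, q j ≤ 1)
    (p : Fin n → ℝ) (hp0 : ∀ j, 0 ≤ p j)
    (ξ : ℕ → Fin n) (hfin : mixedSearchTime t q p ξ < ⊤)
    (k : ℕ) (a b : Fin n) (hka : ξ k = a) (hkb : ξ (k + 1) = b)
    (ξ' : ℕ → Fin n)
    (hξ' : ∀ i, ξ' i = if i = k then ξ (k + 1) else if i = k + 1 then ξ k else ξ i) :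
    (mixedSearchTime t q p ξ).toReal - (mixedSearchTime t q p ξ').toReal =
        t a * (p b * (1 - q b) ^ looks ξ b k * q b) -
          t b * (p a * (1 - q a) ^ looks ξ a k * q a) ∧
      (mixedSearchTime t q p ξ' ≤ mixedSearchTime t q p ξ ↔
        p a * (1 - q a) ^ looks ξ a k * q a / t a ≤
          p b * (1 - q b) ^ looks ξ b k * q b / t b) := by
  obtain rfl : ξ' = ξ ∘ Equiv.swap k (k + 1) := funext fun i => by
    rw [hξ' i, Function.comp_apply, Equiv.swap_apply_def]
    split_ifs <;> rfl
  have ht0 : ∀ j, 0 ≤ t j := fun j => (ht j).le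
  have hwindow : ∀ ζ, 0 ≤ windowCost t q p ζ k := fun ζ => windowCost_nonneg ht0 hq1 hp0 ζ k
  have hexchange := mixedSearchTime_add_windowCost_eq ht0 hq1 hp0 ξ k
  have hfin' : mixedSearchTime t q p (ξ ∘ Equiv.swap k (k + 1)) ≠ ⊤ :=
    ne_top_of_le_ne_top (ENNReal.add_ne_top.2 ⟨hfin.ne, ENNReal.ofReal_ne_top⟩)
      (hexchange.symm ▸ le_self_add)
  have hdiff : (mixedSearchTime t q p ξ).toReal -
      (mixedSearchTime t q p (ξ ∘ Equiv.swap k (k + 1))).toReal =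
        t a * (p b * (1 - q b) ^ looks ξ b k * q b) -
          t b * (p a * (1 - q a) ^ looks ξ a k * q a) := by
    rw [ENNReal.toReal_sub_toReal_of_add_ofReal_eq hfin.ne hfin' (hwindow _) (hwindow _)
      hexchange, windowCost_sub_windowCost_comp_swap, hka, hkb]
  refine ⟨hdiff, ?_⟩
  rw [div_le_div_iff₀ (ht a) (ht b), ← ENNReal.toReal_le_toReal hfin' hfin.ne, ← sub_nonneg,
    hdiff, sub_nonneg]
  constructor <;> intro h <;> linarith

/-- exchange argument. If `u(p,ξ) < ∞` and `ξ` looks in box `a` at position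
`k` and in box `b ≠ a` at position `k+1`, then swapping these two looks changes the
expected search time by
`u(p,ξ) − u(p,ξ') = t_a·p_b(1−q_b)^{N_b(ξ,k)}q_b − t_b·p_a(1−q_a)^{N_a(ξ,k)}q_a`;
in particular `u(p,ξ') ≤ u(p,ξ)` iff
`p_b(1−q_b)^{N_b(ξ,k)}q_b/t_b ≥ p_a(1−q_a)^{N_a(ξ,k)}q_a/t_a`. -/
theorem swap_adjacent_looks
    {n : ℕ} (t q : Fin n → ℝ) (ht : ∀ j, 0 < t j) (hq0 : ∀ j, 0 < q j) (hq1 : ∀ j, q j ≤ 1)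
    (p : Fin n → ℝ) (hp0 : ∀ j, 0 ≤ p j) (hp1 : ∑ j, p j = 1)
    (ξ : ℕ → Fin n) (hfin : mixedSearchTime t q p ξ < ⊤)
    (k : ℕ) (a b : Fin n) (hka : ξ k = a) (hkb : ξ (k + 1) = b) (hab : a ≠ b)
    (ξ' : ℕ → Fin n)
    (hξ' : ∀ i, ξ' i = if i = k then ξ (k + 1) else if i = k + 1 then ξ k else ξ i) :
    (mixedSearchTime t q p ξ).toReal - (mixedSearchTime t q p ξ').toReal =
        t a * (p b * (1 - q b) ^ looks ξ b k * q b) -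
          t b * (p a * (1 - q a) ^ looks ξ a k * q a) ∧
      (mixedSearchTime t q p ξ' ≤ mixedSearchTime t q p ξ ↔
        p a * (1 - q a) ^ looks ξ a k * q a / t a ≤
          p b * (1 - q b) ^ looks ξ b k * q b / t b) :=
  swap_adjacent_looks_general t q ht hq1 p hp0 ξ hfin k a b hka hkb ξ' hξ'
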